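/- arXiv:1201.2647 — 3 statements merged into one kernel-verified Lean document; each statement's English description precedes it below -/
import Mathlib

section
/- The map A : ℝ × Y₀ → Y defined by A(a, x) = q(a) + x is a surjective group homomorphism (with respect to coordinatewise addition on ℝ × Y₀), and its kernel is exactly {(a, q̃(−a)) : a ∈ ℤ}. Moreover A is continuous and is a local homeomorphism. -/
open scoped Real
noncomputable section

/-- `X = ∏_{l≥0} ℝ/r^l ℤ`, with coordinatewise addition and the product topology. -/
abbrev SolX (r : ℕ) := (l : ℕ) → AddCircle ((r : ℝ) ^ l)

/-- The natural homomorphism `ℝ/r^{l+1}ℤ → ℝ/r^l ℤ` induced by the identity on `ℝ`. -/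
def natHom (r l : ℕ) : AddCircle ((r : ℝ) ^ (l + 1)) →+ AddCircle ((r : ℝ) ^ l) :=
  QuotientAddGroup.map _ _ (AddMonoidHom.id ℝ) (by
    intro x hx
    rw [AddSubgroup.mem_comap]
    obtain ⟨k, hk⟩ := AddSubgroup.mem_zmultiples_iff.mp hx
    refine AddSubgroup.mem_zmultiples_iff.mpr ⟨k * (r : ℤ), ?_⟩
    simp only [AddMonoidHom.id_apply, zsmul_eq_mul] at hk ⊢
    rw [← hk]
    push_cast
    ring)

/-- `x ∈ X` is a coherent sequence if `x l` is the image of `x (l+1)` under the natural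
homomorphism, for every `l`. -/
def Coherent (r : ℕ) (x : SolX r) : Prop := ∀ l, natHom r l (x (l + 1)) = x l

/-- The diagonal map `q : ℝ → X`, `q(a) = (a mod r^l ℤ)_{l≥0}`. -/
def qmap (r : ℕ) (a : ℝ) : SolX r := fun _ => (a : AddCircle _)

/-- `X₀ = ∏_{l≥1} ℤ/r^l ℤ`; the coordinate indexed by `l : ℕ` here is the factor
`ℤ/r^(l+1) ℤ` (paper index `l+1`).  Each factor carries the discrete topology, and `X₀`
the product topology. -/
abbrev X0 (r : ℕ) := (l : ℕ) → ZMod (r ^ (l + 1))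

/-- The identification of `X₀` with a subset of `X`: the `l = 0` coordinate is `0` in `ℝ/ℤ`,
and for `l ≥ 1` the coordinate `x_l ∈ ℤ/r^l ℤ` is regarded as an element of `ℝ/r^l ℤ`. -/
def emb (r : ℕ) (x : X0 r) : SolX r
  | 0 => 0
  | (l + 1) => (((x l).val : ℝ) : AddCircle ((r : ℝ) ^ (l + 1)))

/-- The diagonal map `q̃ : ℤ → X₀`, `q̃(a) = (a mod r^l ℤ)_{l≥1}`. -/
def qz (r : ℕ) (a : ℤ) : X0 r := fun l => (a : ZMod (r ^ (l + 1)))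

/-- `x ∈ X₀` is a coherent sequence if `x l` is the image of `x (l+1)` under the natural
ring homomorphism `ℤ/r^{l+2}ℤ → ℤ/r^{l+1}ℤ`, for every `l`. -/
def Coherent0 (r : ℕ) (x : X0 r) : Prop :=
  ∀ l, ZMod.castHom (pow_dvd_pow r (Nat.le_succ (l + 1))) (ZMod (r ^ (l + 1))) (x (l + 1)) = x l

/-- The mapping `A : ℝ × Y₀ → Y`, `A(a,x) = q(a) + x`. -/
def Amap (r : ℕ) (a : ℝ) (x : X0 r) : SolX r := qmap r a + emb r x

/-- `Y₀`, as a topological space (subspace of `X₀`). -/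
abbrev Y0T (r : ℕ) := {x : X0 r // Coherent0 r x}

/-!
In coordinate `0` the map `A` is the covering `ℝ → ℝ/ℤ`, and in coordinate `l ≥ 1` it adds the
image of `x_l` under the injective homomorphism `ℤ/r^lℤ → ℝ/r^lℤ`. A coherent `y` with `y₀ = 0`
has all its coordinates in the image of `ℤ` (push them down to level `0`), so it comes from `Y₀`;
this gives surjectivity with any prescribed real part lifting `y₀`, and the kernel.
`A` is injective on `[c, c + 1) × Y₀`. As `Y₀` is compact (closed in a product of finite sets),
`A` restricted to a compact strip is a homeomorphism onto its image, and the image of the open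
strip is open in `Y`, being cut out by the `0`-th coordinate.
-/

open Set

theorem IsCompact.continuousOn_invFunOn {α β : Type*} [TopologicalSpace α] [TopologicalSpace β]
    [Nonempty α] [T2Space β] {f : α → β} {K : Set α} (hK : IsCompact K) (hf : ContinuousOn f K)
    (hinj : InjOn f K) : ContinuousOn (Function.invFunOn f K) (f '' K) := by
  refine continuousOn_iff_isClosed.mpr fun t ht => ⟨f '' (t ∩ K), ?_, ?_⟩
  · exact ((hK.inter_left ht).image_of_continuousOn (hf.mono inter_subset_right)).isClosed
  · ext y
    constructor
    · rintro ⟨hy, x, hx, rfl⟩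
      rw [mem_preimage, hinj.leftInvOn_invFunOn hx] at hy
      exact ⟨⟨x, ⟨hy, hx⟩, rfl⟩, x, hx, rfl⟩
    · rintro ⟨⟨x, ⟨hxt, hxK⟩, rfl⟩, hy⟩
      exact ⟨by rwa [mem_preimage, hinj.leftInvOn_invFunOn hxK], hy⟩

section

variable {m : ℕ} {p : ℝ}

def zmodToAddCircle (hm : (m : ℝ) = p) : ZMod m →+ AddCircle p :=
  ZMod.lift m ⟨(QuotientAddGroup.mk' _).comp (Int.castAddHom ℝ), by
    simp [← hm]⟩

theorem zmodToAddCircle_intCast (hm : (m : ℝ) = p) (k : ℤ) :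
    zmodToAddCircle hm k = ((k : ℝ) : AddCircle p) :=
  ZMod.lift_coe _ _ k

variable [NeZero m]

theorem zmodToAddCircle_apply (hm : (m : ℝ) = p) (z : ZMod m) :
    zmodToAddCircle hm z = ((z.val : ℝ) : AddCircle p) := by
  conv_lhs => rw [← ZMod.natCast_zmod_val z, ← Int.cast_natCast, zmodToAddCircle_intCast]
  simp

theorem zmodToAddCircle_injective (hm : (m : ℝ) = p) :
    Function.Injective (zmodToAddCircle hm) := by
  have hp : Fact (0 < p) := ⟨hm ▸ Nat.cast_pos.mpr (NeZero.pos m)⟩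
  have hval (z : ZMod m) : (z.val : ℝ) ∈ Ico 0 (0 + p) :=
    ⟨z.val.cast_nonneg, by rw [zero_add, ← hm]; exact_mod_cast z.val_lt⟩
  intro x y h
  rw [zmodToAddCircle_apply, zmodToAddCircle_apply,
    AddCircle.coe_eq_coe_iff_of_mem_Ico (hval x) (hval y)] at h
  exact ZMod.val_injective m (by exact_mod_cast h)

end

section

variable {r : ℕ}

theorem natHom_coe (l : ℕ) (c : ℝ) :
    natHom r l (c : AddCircle ((r : ℝ) ^ (l + 1))) = (c : AddCircle ((r : ℝ) ^ l)) :=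
  rfl

theorem Coherent.add {y z : SolX r} (hy : Coherent r y) (hz : Coherent r z) :
    Coherent r (y + z) := fun l => by
  simp only [Pi.add_apply, map_add, hy l, hz l]

theorem Coherent.sub {y z : SolX r} (hy : Coherent r y) (hz : Coherent r z) :
    Coherent r (y - z) := fun l => by
  simp only [Pi.sub_apply, map_sub, hy l, hz l]

theorem coherent_qmap (a : ℝ) : Coherent r (qmap r a) := fun _ => rfl

theorem Coherent.apply_zero_eq_coe {y : SolX r} (hy : Coherent r y) {l : ℕ} {c : ℝ}
    (h : y l = c) : y 0 = c := by
  induction l with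
  | zero => exact h
  | succ l ih => exact ih (by rw [← hy l, h, natHom_coe])

theorem qmap_add (a b : ℝ) : qmap r (a + b) = qmap r a + qmap r b :=
  funext fun _ => AddCircle.coe_add _ a b

theorem qmap_neg (a : ℝ) : qmap r (-a) = -qmap r a :=
  funext fun _ => AddCircle.coe_neg _

theorem natHom_zmodToAddCircle (l : ℕ) (z : ZMod (r ^ (l + 2))) :
    natHom r (l + 1) (zmodToAddCircle (Nat.cast_pow r (l + 2)) z) =
      zmodToAddCircle (Nat.cast_pow r (l + 1))
        (ZMod.castHom (pow_dvd_pow r (Nat.le_succ (l + 1))) _ z) := by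
  obtain ⟨k, rfl⟩ := ZMod.intCast_surjective z
  rw [zmodToAddCircle_intCast, map_intCast, zmodToAddCircle_intCast, natHom_coe]

theorem Amap_apply_zero (a : ℝ) (x : X0 r) : Amap r a x 0 = (a : AddCircle ((r : ℝ) ^ 0)) :=
  add_zero (a : AddCircle ((r : ℝ) ^ 0))

end

section

variable {r : ℕ} [NeZero r]

theorem emb_succ (x : X0 r) (l : ℕ) :
    emb r x (l + 1) = zmodToAddCircle (Nat.cast_pow r (l + 1)) (x l) :=
  (zmodToAddCircle_apply _ _).symm

theorem emb_add (x y : X0 r) : emb r (x + y) = emb r x + emb r y := by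
  funext l
  cases l with
  | zero => exact (add_zero 0).symm
  | succ l => simp only [Pi.add_apply, emb_succ, map_add]

theorem emb_qz (k : ℤ) : emb r (qz r k) = qmap r k := by
  funext l
  cases l with
  | zero => exact ((AddCircle.coe_eq_zero_iff _).mpr ⟨k, by simp⟩).symm
  | succ l => rw [emb_succ, qz, zmodToAddCircle_intCast]; rfl

theorem emb_injective : Function.Injective (emb r) := fun x y h =>
  funext fun l => zmodToAddCircle_injective _ <| by rw [← emb_succ, ← emb_succ, h]

theorem coherent_emb_iff {x : X0 r} : Coherent r (emb r x) ↔ Coherent0 r x := by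
  have hbottom : natHom r 0 (emb r x 1) = emb r x 0 :=
    (AddCircle.coe_eq_zero_iff _).mpr ⟨(x 0).val, by simp⟩
  refine ⟨fun h l => ?_, fun h l => ?_⟩
  · apply zmodToAddCircle_injective (Nat.cast_pow r (l + 1))
    rw [← natHom_zmodToAddCircle, ← emb_succ, ← emb_succ, h]
  · cases l with
    | zero => exact hbottom
    | succ l => rw [emb_succ, emb_succ, natHom_zmodToAddCircle, h]

theorem exists_emb_eq {z : SolX r} (hz : Coherent r z) (hz0 : z 0 = 0) :
    ∃ x : X0 r, emb r x = z := by
  have hint (l : ℕ) : ∃ k : ℤ, z (l + 1) = ((k : ℝ) : AddCircle _) := by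
    obtain ⟨c, hc⟩ := QuotientAddGroup.mk_surjective (z (l + 1))
    have hc0 : ((c : ℝ) : AddCircle ((r : ℝ) ^ 0)) = 0 :=
      (hz.apply_zero_eq_coe hc.symm).symm.trans hz0
    obtain ⟨k, hk⟩ := (AddCircle.coe_eq_zero_iff _).mp hc0
    exact ⟨k, by rw [← hc, ← hk]; simp⟩
  choose k hk using hint
  refine ⟨fun l => (k l : ZMod _), funext fun l => ?_⟩
  cases l with
  | zero => exact hz0.symm
  | succ l => rw [emb_succ, zmodToAddCircle_intCast, hk]

end

section

variable {r : ℕ} [NeZero r]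

theorem Amap_add (a b : ℝ) (x y : X0 r) :
    Amap r (a + b) (x + y) = Amap r a x + Amap r b y := by
  simp only [Amap, qmap_add, emb_add, add_add_add_comm]

theorem coherent_Amap (a : ℝ) {x : X0 r} (hx : Coherent0 r x) : Coherent r (Amap r a x) :=
  (coherent_qmap a).add (coherent_emb_iff.mpr hx)

theorem exists_Amap_eq {y : SolX r} (hy : Coherent r y) {a : ℝ}
    (ha : (a : AddCircle ((r : ℝ) ^ 0)) = y 0) : ∃ x : X0 r, Coherent0 r x ∧ Amap r a x = y := by
  have hz : Coherent r (y - qmap r a) := hy.sub (coherent_qmap a)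
  obtain ⟨x, hx⟩ := exists_emb_eq hz (sub_eq_zero.mpr ha.symm)
  exact ⟨x, coherent_emb_iff.mp (hx ▸ hz), by rw [Amap, hx, add_sub_cancel]⟩

theorem Amap_eq_zero_iff (a : ℝ) (x : X0 r) :
    Amap r a x = 0 ↔ ∃ n : ℤ, a = n ∧ x = qz r (-n) := by
  constructor
  · intro h
    have h0 : (a : AddCircle ((r : ℝ) ^ 0)) = 0 := (Amap_apply_zero a x).symm.trans (congrFun h 0)
    obtain ⟨n, hn⟩ := (AddCircle.coe_eq_zero_iff _).mp h0
    have ha : a = n := by rw [← hn]; simp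
    refine ⟨n, ha, emb_injective ?_⟩
    rw [emb_qz, Int.cast_neg, qmap_neg, ← ha]
    exact eq_neg_of_add_eq_zero_right h
  · rintro ⟨n, rfl, rfl⟩
    rw [Amap, emb_qz, Int.cast_neg, qmap_neg, add_neg_cancel]

end

section

variable {r : ℕ}

def AmapY (r : ℕ) (p : ℝ × Y0T r) : SolX r := Amap r p.1 p.2.1

theorem continuous_qmap : Continuous (qmap r) :=
  continuous_pi fun _ => AddCircle.continuous_mk' _

theorem continuous_emb : Continuous (emb r) := by
  refine continuous_pi fun l => ?_
  cases l with
  | zero => exact continuous_const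
  | succ l =>
    exact (continuous_of_discreteTopology (f := fun z : ZMod (r ^ (l + 1)) =>
      ((z.val : ℝ) : AddCircle ((r : ℝ) ^ (l + 1))))).comp (continuous_apply l)

theorem continuous_AmapY : Continuous (AmapY r) :=
  (continuous_qmap.comp continuous_fst).add
    (continuous_emb.comp (continuous_subtype_val.comp continuous_snd))

theorem isClosed_setOf_coherent0 : IsClosed {x : X0 r | Coherent0 r x} := by
  simp only [Coherent0, ofPred_forall]
  exact isClosed_iInter fun l =>
    isClosed_eq (continuous_of_discreteTopology.comp (continuous_apply _)) (continuous_apply l)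

variable [NeZero r]

instance : CompactSpace (Y0T r) :=
  isCompact_iff_compactSpace.mp isClosed_setOf_coherent0.isCompact

theorem AmapY_injOn_Ico_prod (c : ℝ) : InjOn (AmapY r) (Ico c (c + 1) ×ˢ univ) := by
  rintro ⟨a, x⟩ ⟨ha, -⟩ ⟨b, y⟩ ⟨hb, -⟩ h
  have hp : Fact (0 < (r : ℝ) ^ 0) := ⟨by simp⟩
  have hab : a = b := by
    have h0 := congrFun h 0
    simp only [AmapY, Amap_apply_zero] at h0
    exact (AddCircle.coe_eq_coe_iff_of_mem_Ico (by simpa using ha) (by simpa using hb)).mp h0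
  subst hab
  exact Prod.ext rfl (Subtype.ext (emb_injective (add_left_cancel h)))

theorem AmapY_image_prod_univ (S : Set ℝ) :
    AmapY r '' (S ×ˢ univ) =
      (fun y : SolX r => y 0) ⁻¹' (((↑) : ℝ → AddCircle ((r : ℝ) ^ 0)) '' S) ∩
        {y | Coherent r y} := by
  ext y
  constructor
  · rintro ⟨⟨a, x⟩, ⟨haS, -⟩, rfl⟩
    exact ⟨⟨a, haS, (Amap_apply_zero a x.1).symm⟩, coherent_Amap a x.2⟩
  · rintro ⟨⟨a, haS, ha⟩, hy⟩
    obtain ⟨x, hx, rfl⟩ := exists_Amap_eq hy ha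
    exact ⟨(a, ⟨x, hx⟩), ⟨haS, trivial⟩, rfl⟩

end

/-- `A : ℝ × Y₀ → Y` is a surjective group homomorphism with kernel
`{(a, q̃(-a)) : a ∈ ℤ}`, it is continuous, and it is a local homeomorphism onto `Y`. -/
theorem stmt_10 (r : ℕ) (hr : 2 ≤ r) :
    -- A maps ℝ × Y₀ into Y
    (∀ (a : ℝ) (x : X0 r), Coherent0 r x → Coherent r (Amap r a x)) ∧
    -- A is a homomorphism
    (∀ (a b : ℝ) (x y : X0 r), Coherent0 r x → Coherent0 r y →
      Amap r (a + b) (x + y) = Amap r a x + Amap r b y) ∧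
    -- A is surjective onto Y
    (∀ y : SolX r, Coherent r y → ∃ (a : ℝ) (x : X0 r), Coherent0 r x ∧ Amap r a x = y) ∧
    -- the kernel of A is {(a, q̃(-a)) : a ∈ ℤ}
    (∀ (a : ℝ) (x : X0 r), Coherent0 r x →
      (Amap r a x = 0 ↔ ∃ n : ℤ, a = (n : ℝ) ∧ x = qz r (-n))) ∧
    -- A is continuous (equivalently, continuous into the subspace Y of X)
    Continuous (fun p : ℝ × Y0T r => Amap r p.1 p.2.1) ∧
    -- A is a local homeomorphism onto Y: every point of ℝ × Y₀ has an open neighborhood U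
    -- mapped bijectively onto a relatively open subset of Y, with continuous inverse
    (∀ p : ℝ × Y0T r, ∃ U : Set (ℝ × Y0T r), p ∈ U ∧ IsOpen U ∧
      (∃ V : Set (SolX r), IsOpen V ∧
        (fun q : ℝ × Y0T r => Amap r q.1 q.2.1) '' U = V ∩ {y | Coherent r y} ∧
        Set.InjOn (fun q : ℝ × Y0T r => Amap r q.1 q.2.1) U ∧
        (∃ g : SolX r → ℝ × Y0T r,
          ContinuousOn g (V ∩ {y | Coherent r y}) ∧
          ∀ q ∈ U, g (Amap r q.1 q.2.1) = q))) := by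
  have : NeZero r := ⟨by omega⟩
  refine ⟨fun a x hx => coherent_Amap a hx, fun a b x y _ _ => Amap_add a b x y,
    fun y hy => ?_, fun a x _ => Amap_eq_zero_iff a x, continuous_AmapY, fun p => ?_⟩
  · obtain ⟨a, ha⟩ := QuotientAddGroup.mk_surjective (y 0)
    obtain ⟨x, hx, rfl⟩ := exists_Amap_eq hy ha
    exact ⟨a, x, hx, rfl⟩
  · have : Nonempty (ℝ × Y0T r) := ⟨p⟩
    obtain ⟨a₀, x₀⟩ := p
    set I := Ioo (a₀ - 1 / 3) (a₀ + 1 / 3)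
    set K : Set (ℝ × Y0T r) := Icc (a₀ - 1 / 3) (a₀ + 1 / 3) ×ˢ univ
    have hUK : I ×ˢ univ ⊆ K := prod_mono Ioo_subset_Icc_self subset_rfl
    have hinj : InjOn (AmapY r) K := (AmapY_injOn_Ico_prod (a₀ - 1 / 3)).mono
      (prod_mono (Icc_subset_Ico_right (by linarith)) subset_rfl)
    have hg := (isCompact_Icc.prod isCompact_univ).continuousOn_invFunOn
      continuous_AmapY.continuousOn hinj
    have hV : IsOpen ((fun y : SolX r => y 0) ⁻¹' (((↑) : ℝ → AddCircle ((r : ℝ) ^ 0)) '' I)) :=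
      (QuotientAddGroup.isOpenMap_coe (N := AddSubgroup.zmultiples ((r : ℝ) ^ 0)) I
        isOpen_Ioo).preimage (continuous_apply (0 : ℕ))
    refine ⟨I ×ˢ univ, ⟨⟨by linarith, by linarith⟩, trivial⟩, isOpen_Ioo.prod isOpen_univ,
      _, hV, AmapY_image_prod_univ I, hinj.mono hUK, Function.invFunOn (AmapY r) K, ?_,
      fun q hq => hinj.leftInvOn_invFunOn (hUK hq)⟩
    rw [← AmapY_image_prod_univ]
    exact hg.mono (image_mono hUK)
end
end

section
/- For all (a, x), (b, y) ∈ ℝ × Y₀ one has d(A(a, x), A(b, y)) ≤ 2π · D((a, x), (b, y)), where D((a, x), (b, y)) = max(|a − b|, ρ(x, y)). -/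
open scoped Real
noncomputable section

/-- The standard isomorphism `φ_l : ℝ/r^l ℤ → 𝕋 ⊆ ℂ`, `φ_l(a mod r^l ℤ) = exp(2πi r^{-l} a)`,
viewed as a complex-valued function. -/
def phi (r l : ℕ) (x : AddCircle ((r : ℝ) ^ l)) : ℂ := (AddCircle.toCircle x : ℂ)

/-- The `l`-th term `r^{-l} |φ_l(x_l) - φ_l(y_l)|`. -/
def dterm (r : ℕ) (x y : SolX r) (l : ℕ) : ℝ :=
  ((r : ℝ) ^ l)⁻¹ * ‖phi r l (x l) - phi r l (y l)‖

/-- `d(x,y) = max_{l ≥ 0} r^{-l} |φ_l(x_l) - φ_l(y_l)|`. -/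
def dX (r : ℕ) (x y : SolX r) : ℝ := ⨆ l, dterm r x y l

/-- For `x ≠ y`, the (`0`-based) index of the first coordinate where `x` and `y` differ;
in the paper's (`1`-based) notation this is `l(x,y) - 1`. -/
def firstDiff (r : ℕ) (x y : X0 r) : ℕ := sInf {n | x n ≠ y n}

open Classical in
/-- `ρ(x,y) = r^{-l(x,y)+1}`, and `ρ(x,x) = 0`. -/
def rho (r : ℕ) (x y : X0 r) : ℝ :=
  if x = y then 0 else ((r : ℝ) ^ firstDiff r x y)⁻¹

/-- The metric `D((a,x),(b,y)) = max(|a-b|, ρ(x,y))` on `ℝ × Y₀`. -/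
def Dmet (r : ℕ) (a b : ℝ) (x y : X0 r) : ℝ := max |a - b| (rho r x y)

/-
Changing `a` rotates the `l`-th coordinate `φ_l(A(a, x)_l)` by the angle `2π a / r^l`, and
`exp (i ·)` is `1`-Lipschitz; so on every coordinate where `x` and `y` agree the weighted chord
`r^{-l} |φ_l(A(a,x)_l) - φ_l(A(b,y)_l)|` is at most `r^{-2l} 2π |a - b| ≤ 2π |a - b|`. On a
coordinate `l = m + 1` where they differ, `ρ(x, y) ≥ r^{-m}` while the chord is at most `2`, so the
weighted term is at most `2 r^{-(m+1)} ≤ 2π ρ(x, y)`.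
-/

open AddCircle

lemma Circle.norm_coe_exp_sub_coe_exp_le (s t : ℝ) :
    ‖(Circle.exp s : ℂ) - Circle.exp t‖ ≤ |s - t| := by
  have h : (Circle.exp s : ℂ) - Circle.exp t
      = Circle.exp t * (Complex.exp (Complex.I * (s - t : ℝ)) - 1) := by
    simp only [Circle.coe_exp, mul_sub, mul_one, ← Complex.exp_add]
    push_cast
    ring_nf
  rw [h, norm_mul, Circle.norm_coe, one_mul, ← Real.norm_eq_abs]
  exact Real.norm_exp_I_mul_ofReal_sub_one_le

lemma AddCircle.norm_toCircle_coe_sub_le {T : ℝ} (hT : 0 ≤ T) (s t : ℝ) :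
    ‖(toCircle (s : AddCircle T) : ℂ) - toCircle (t : AddCircle T)‖ ≤ 2 * π / T * |s - t| := by
  rw [toCircle_apply_mk, toCircle_apply_mk]
  refine (Circle.norm_coe_exp_sub_coe_exp_le _ _).trans_eq ?_
  rw [← mul_sub, abs_mul, abs_of_nonneg (by positivity)]

lemma AddCircle.norm_toCircle_add_sub_toCircle_add {T : ℝ} (x y u : AddCircle T) :
    ‖(toCircle (x + u) : ℂ) - toCircle (y + u)‖ = ‖(toCircle x : ℂ) - toCircle y‖ := by
  rw [toCircle_add, toCircle_add, Circle.coe_mul, Circle.coe_mul, ← sub_mul, norm_mul,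
    Circle.norm_coe, mul_one]

variable {r : ℕ}

lemma dterm_le_two_mul_inv_pow (x y : SolX r) (l : ℕ) : dterm r x y l ≤ 2 * ((r : ℝ) ^ l)⁻¹ := by
  have hchord : ‖phi r l (x l) - phi r l (y l)‖ ≤ 2 := by
    refine (norm_sub_le _ _).trans_eq ?_
    rw [phi, phi, Circle.norm_coe, Circle.norm_coe]
    norm_num
  rw [dterm, mul_comm 2]
  exact mul_le_mul_of_nonneg_left hchord (by positivity)

lemma dterm_Amap_le_of_emb_eq (hr : 1 ≤ r) (a b : ℝ) {x y : X0 r} {l : ℕ}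
    (h : emb r x l = emb r y l) :
    dterm r (Amap r a x) (Amap r b y) l ≤ 2 * π * |a - b| := by
  have hpow : (1 : ℝ) ≤ (r : ℝ) ^ l := one_le_pow₀ (by exact_mod_cast hr)
  have hchord : ‖phi r l (Amap r a x l) - phi r l (Amap r b y l)‖ ≤ 2 * π / (r : ℝ) ^ l * |a - b| := by
    rw [phi, phi, Amap, Amap, Pi.add_apply, Pi.add_apply, h, norm_toCircle_add_sub_toCircle_add]
    exact norm_toCircle_coe_sub_le (by positivity) a b
  calc dterm r (Amap r a x) (Amap r b y) l
      ≤ ((r : ℝ) ^ l)⁻¹ * (2 * π / (r : ℝ) ^ l * |a - b|) :=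
        mul_le_mul_of_nonneg_left hchord (by positivity)
    _ ≤ 1 * (2 * π * |a - b|) := by
        gcongr
        · exact inv_le_one_of_one_le₀ hpow
        · exact div_le_self (by positivity) hpow
    _ = 2 * π * |a - b| := one_mul _

lemma dterm_le_two_pi_mul_rho (hr : 1 ≤ r) {x y : X0 r} {m : ℕ} (hm : x m ≠ y m)
    (u v : SolX r) : dterm r u v (m + 1) ≤ 2 * π * rho r x y := by
  have hxy : x ≠ y := fun h => hm (congrFun h m)
  have hfirst : firstDiff r x y ≤ m + 1 := (Nat.sInf_le hm).trans m.le_succ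
  have hpow : (r : ℝ) ^ firstDiff r x y ≤ (r : ℝ) ^ (m + 1) :=
    pow_le_pow_right₀ (by exact_mod_cast hr) hfirst
  have hpos : (0 : ℝ) < (r : ℝ) ^ firstDiff r x y := by positivity
  calc dterm r u v (m + 1) ≤ 2 * ((r : ℝ) ^ (m + 1))⁻¹ := dterm_le_two_mul_inv_pow u v (m + 1)
    _ ≤ 2 * π * ((r : ℝ) ^ firstDiff r x y)⁻¹ := by
        gcongr
        · linarith [Real.pi_gt_three]
    _ = 2 * π * rho r x y := by rw [rho, if_neg hxy]

/-- `d(A(a,x), A(b,y)) ≤ 2π D((a,x),(b,y))` for all `(a,x), (b,y) ∈ ℝ × Y₀`. -/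
theorem stmt_11 (r : ℕ) (hr : 2 ≤ r) :
    ∀ (a b : ℝ) (x y : X0 r), Coherent0 r x → Coherent0 r y →
      dX r (Amap r a x) (Amap r b y) ≤ 2 * Real.pi * Dmet r a b x y := by
  intro a b x y _ _
  have hr1 : 1 ≤ r := by omega
  have hshift : 2 * π * |a - b| ≤ 2 * π * Dmet r a b x y := by
    gcongr
    exact le_max_left _ _
  refine ciSup_le fun l => ?_
  rcases l with _ | m
  · exact (dterm_Amap_le_of_emb_eq hr1 a b rfl).trans hshift
  by_cases hm : x m = y m
  · exact (dterm_Amap_le_of_emb_eq hr1 a b (by rw [emb, emb, hm])).trans hshift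
  · refine (dterm_le_two_pi_mul_rho hr1 hm _ _).trans ?_
    gcongr
    exact le_max_right _ _
end
end

section
/- There exists a constant c₂ > 0, depending only on r, such that for all a, b ∈ ℝ with |a − b| ≤ 1/2 and all x, y ∈ Y₀, one has D((a, x), (b, y)) ≤ c₂ · d(A(a, x), A(b, y)), where D((a, x), (b, y)) = max(|a − b|, ρ(x, y)). -/
open scoped Real
noncomputable section

/-! The level-`0` term of `d` already controls `|a - b|`, because the chord `|e^{2πiw} - 1|` is at
least `4` times the distance from `w` to `ℤ` (Jordan's inequality). If `x ≠ y` first differ at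
paper level `n + 1`, coherence makes `x_{n+1} - y_{n+1}` divisible by `r^n` but not by `r^{n+1}`;
hence `(a - b + x_{n+1} - y_{n+1}) / r^{n+1}` stays at distance `≥ 1/(2r)` from `ℤ`, and the level
`n + 1` term of `d` is at least `2 r^{-(n+2)} = (2/r²) ρ(x, y)`. -/
open Complex in
lemma four_mul_abs_sub_round_le_norm_exp_sub_one (w : ℝ) :
    4 * |w - round w| ≤ ‖exp (↑(2 * π * w) * I) - 1‖ := by
  set u := w - round w
  have hu : |u| ≤ 1 / 2 := abs_sub_round w
  have hexp : exp (↑(2 * π * w) * I) = exp (I * ↑(2 * π * u)) := by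
    have : ↑(2 * π * w) * I = I * ↑(2 * π * u) + (round w : ℤ) * (2 * π * I) := by
      simp only [u]; push_cast; ring
    rw [this, exp_add, exp_int_mul_two_pi_mul_I, mul_one]
  have hsin : 2 / π * |π * u| ≤ |Real.sin (π * u)| := by
    refine Real.mul_abs_le_abs_sin ?_
    rw [abs_mul, abs_of_pos Real.pi_pos]
    nlinarith [Real.pi_pos]
  rw [hexp, norm_exp_I_mul_ofReal_sub_one, norm_mul, Real.norm_eq_abs, Real.norm_eq_abs,
    show 2 * π * u / 2 = π * u by ring, abs_two]
  rw [abs_mul, abs_of_pos Real.pi_pos] at hsin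
  have : 2 / π * (π * |u|) = 2 * |u| := by field_simp
  linarith

lemma abs_le_abs_sub_intCast {w : ℝ} (hw : |w| ≤ 1 / 2) (m : ℤ) : |w| ≤ |w - m| := by
  rcases eq_or_ne m 0 with rfl | hm
  · simp
  · have h1 : (1 : ℝ) ≤ |(m : ℝ)| := by exact_mod_cast Int.one_le_abs hm
    have h2 := abs_sub_abs_le_abs_sub (m : ℝ) w
    rw [abs_sub_comm] at h2
    linarith

lemma norm_phi_sub_phi (r l : ℕ) (u v : ℝ) :
    ‖phi r l u - phi r l v‖
      = ‖Complex.exp (↑(2 * π * ((u - v) / (r : ℝ) ^ l)) * Complex.I) - 1‖ := by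
  have h : phi r l u - phi r l v
      = phi r l v * (Complex.exp (↑(2 * π * ((u - v) / (r : ℝ) ^ l)) * Complex.I) - 1) := by
    simp only [phi, AddCircle.toCircle_apply_mk, Circle.coe_exp, mul_sub, mul_one,
      ← Complex.exp_add]
    congr 2
    push_cast
    ring
  rw [h, norm_mul, phi, Circle.norm_coe, one_mul]

lemma four_mul_le_norm_phi_sub {r l : ℕ} {u v δ : ℝ}
    (hδ : ∀ m : ℤ, δ ≤ |(u - v) / (r : ℝ) ^ l - m|) :
    4 * δ ≤ ‖phi r l u - phi r l v‖ := by
  rw [norm_phi_sub_phi]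
  exact (mul_le_mul_of_nonneg_left (hδ _) (by norm_num)).trans
    (four_mul_abs_sub_round_le_norm_exp_sub_one _)

lemma dterm_le_two (r : ℕ) (x y : SolX r) (l : ℕ) : dterm r x y l ≤ 2 := by
  have hinv : ((r : ℝ) ^ l)⁻¹ ≤ 1 := by exact_mod_cast Nat.cast_inv_le_one (α := ℝ) (r ^ l)
  have hnorm : ‖phi r l (x l) - phi r l (y l)‖ ≤ 2 :=
    (norm_sub_le _ _).trans (by simp only [phi, Circle.norm_coe]; norm_num)
  calc dterm r x y l ≤ 1 * 2 := mul_le_mul hinv hnorm (norm_nonneg _) zero_le_one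
    _ = 2 := one_mul 2

lemma dterm_le_dX (r : ℕ) (x y : SolX r) (l : ℕ) : dterm r x y l ≤ dX r x y :=
  le_ciSup ⟨2, Set.forall_mem_range.mpr (dterm_le_two r x y)⟩ l

lemma dX_nonneg (r : ℕ) (x y : SolX r) : 0 ≤ dX r x y :=
  (mul_nonneg (by positivity) (norm_nonneg _)).trans (dterm_le_dX r x y 0)

lemma Amap_zero (r : ℕ) (a : ℝ) (x : X0 r) : Amap r a x 0 = (a : AddCircle ((r : ℝ) ^ 0)) := by
  simp [Amap, qmap, emb]

lemma Amap_succ (r : ℕ) (a : ℝ) (x : X0 r) (l : ℕ) :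
    Amap r a x (l + 1) = ((a + (x l).val : ℝ) : AddCircle ((r : ℝ) ^ (l + 1))) := by
  simp [Amap, qmap, emb]

lemma four_mul_abs_sub_le_dterm_zero (r : ℕ) {a b : ℝ} (hab : |a - b| ≤ 1 / 2) (x y : X0 r) :
    4 * |a - b| ≤ dterm r (Amap r a x) (Amap r b y) 0 := by
  have hnorm : 4 * |a - b| ≤ ‖phi r 0 a - phi r 0 b‖ :=
    four_mul_le_norm_phi_sub fun m => by simpa using abs_le_abs_sub_intCast hab m
  simpa [dterm, Amap_zero] using hnorm

lemma apply_firstDiff_ne {r : ℕ} {x y : X0 r} (hxy : x ≠ y) :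
    x (firstDiff r x y) ≠ y (firstDiff r x y) :=
  Nat.sInf_mem (Function.ne_iff.mp hxy)

lemma eq_of_lt_firstDiff {r : ℕ} {x y : X0 r} {m : ℕ} (hm : m < firstDiff r x y) : x m = y m :=
  not_not.mp (Nat.notMem_of_lt_sInf hm)

lemma Coherent0.natCast_val_succ {r : ℕ} [NeZero r] {x : X0 r} (hx : Coherent0 r x) (l : ℕ) :
    ((x (l + 1)).val : ZMod (r ^ (l + 1))) = x l := by
  rw [← hx l, ZMod.castHom_apply, ZMod.cast_eq_val]

lemma Coherent0.pow_dvd_val_sub_val_succ {r : ℕ} [NeZero r] {x y : X0 r} (hx : Coherent0 r x)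
    (hy : Coherent0 r y) {l : ℕ} (h : x l = y l) :
    (r : ℤ) ^ (l + 1) ∣ (x (l + 1)).val - (y (l + 1)).val := by
  have hmod := (hx.natCast_val_succ l).trans (h.trans (hy.natCast_val_succ l).symm)
  rw [ZMod.natCast_eq_natCast_iff, Nat.modEq_iff_dvd] at hmod
  push_cast at hmod
  exact dvd_sub_comm.mp hmod

lemma pow_firstDiff_dvd_val_sub {r : ℕ} [NeZero r] {x y : X0 r} (hx : Coherent0 r x)
    (hy : Coherent0 r y) :
    (r : ℤ) ^ firstDiff r x y ∣ (x (firstDiff r x y)).val - (y (firstDiff r x y)).val := by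
  cases h : firstDiff r x y with
  | zero => simp
  | succ m => exact hx.pow_dvd_val_sub_val_succ hy (eq_of_lt_firstDiff (by omega))

lemma not_pow_firstDiff_succ_dvd_val_sub {r : ℕ} [NeZero r] {x y : X0 r} (hxy : x ≠ y) :
    ¬ (r : ℤ) ^ (firstDiff r x y + 1) ∣ (x (firstDiff r x y)).val - (y (firstDiff r x y)).val := by
  intro hdvd
  apply apply_firstDiff_ne hxy
  rw [← ZMod.natCast_zmod_val (x _), ← ZMod.natCast_zmod_val (y _), ← Int.cast_natCast,
    ← Int.cast_natCast (R := ZMod _) (y _).val, ZMod.intCast_eq_intCast_iff_dvd_sub]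
  push_cast
  exact dvd_sub_comm.mp hdvd

lemma le_abs_sub_mul_of_dvd_of_not_dvd {d N k : ℤ} (hdk : d ∣ k) (hdN : d ∣ N) (hNk : ¬ N ∣ k)
    (m : ℤ) : d ≤ |k - m * N| := by
  have hne : k - m * N ≠ 0 := fun h => hNk ⟨m, by linear_combination h⟩
  exact Int.le_of_dvd (abs_pos.mpr hne)
    ((dvd_abs _ _).mpr (dvd_sub hdk (dvd_mul_of_dvd_right hdN m)))

lemma div_two_mul_le_abs_add_div_sub {t : ℝ} (ht : |t| ≤ 1 / 2) {d N k : ℤ} (hd : 1 ≤ d)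
    (hN : 0 < N) (hdk : d ∣ k) (hdN : d ∣ N) (hNk : ¬ N ∣ k) (m : ℤ) :
    (d : ℝ) / (2 * N) ≤ |(t + k) / N - m| := by
  have hNR : (0 : ℝ) < N := by exact_mod_cast hN
  have hdR : (1 : ℝ) ≤ d := by exact_mod_cast hd
  have hkm : (d : ℝ) ≤ |(k : ℝ) - m * N| := by
    exact_mod_cast le_abs_sub_mul_of_dvd_of_not_dvd hdk hdN hNk m
  have htri := abs_sub_abs_le_abs_sub ((k : ℝ) - m * N) (-t)
  rw [abs_neg, sub_neg_eq_add] at htri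
  rw [show (t + k) / N - m = (k - m * N + t) / N by field_simp; ring, abs_div, abs_of_pos hNR,
    div_le_div_iff₀ (by positivity) hNR]
  nlinarith

lemma two_div_pow_le_dterm_firstDiff_succ {r : ℕ} [NeZero r] {a b : ℝ} (hab : |a - b| ≤ 1 / 2)
    {x y : X0 r} (hx : Coherent0 r x) (hy : Coherent0 r y) (hxy : x ≠ y) :
    2 / (r : ℝ) ^ (firstDiff r x y + 2)
      ≤ dterm r (Amap r a x) (Amap r b y) (firstDiff r x y + 1) := by
  set n := firstDiff r x y with hn
  have hr0 : (r : ℝ) ≠ 0 := Nat.cast_ne_zero.mpr (NeZero.ne r)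
  have hr1 : (1 : ℤ) ≤ r := by exact_mod_cast NeZero.one_le
  have hsep : ∀ m : ℤ, 1 / (2 * r) ≤
      |((a + (x n).val) - (b + (y n).val)) / (r : ℝ) ^ (n + 1) - m| := by
    intro m
    have h := div_two_mul_le_abs_add_div_sub hab (one_le_pow₀ hr1) (by positivity)
      (pow_firstDiff_dvd_val_sub hx hy) (pow_dvd_pow _ (Nat.le_succ n))
      (not_pow_firstDiff_succ_dvd_val_sub hxy) m
    rw [← hn, Nat.succ_eq_add_one] at h
    push_cast at h
    rw [show (r : ℝ) ^ n / (2 * r ^ (n + 1)) = 1 / (2 * r) by rw [pow_succ]; field_simp] at h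
    refine h.trans_eq ?_
    congr 2
    ring
  rw [dterm, Amap_succ, Amap_succ]
  calc 2 / (r : ℝ) ^ (n + 2) = ((r : ℝ) ^ (n + 1))⁻¹ * (4 * (1 / (2 * r))) := by
        field_simp
        ring
    _ ≤ _ := mul_le_mul_of_nonneg_left (four_mul_le_norm_phi_sub hsep) (by positivity)

/-- There is a constant `c₂ > 0`, depending only on `r`, such that
`D((a,x),(b,y)) ≤ c₂ d(A(a,x), A(b,y))` whenever `|a - b| ≤ 1/2` and `x, y ∈ Y₀`. -/
theorem stmt_12 (r : ℕ) (hr : 2 ≤ r) :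
    ∃ c₂ : ℝ, 0 < c₂ ∧
      ∀ (a b : ℝ) (x y : X0 r), Coherent0 r x → Coherent0 r y → |a - b| ≤ 1 / 2 →
        Dmet r a b x y ≤ c₂ * dX r (Amap r a x) (Amap r b y) := by
  have : NeZero r := ⟨by omega⟩
  have hr2 : (2 : ℝ) ≤ r := by exact_mod_cast hr
  refine ⟨r ^ 2 / 2, by positivity, fun a b x y hx hy hab => max_le ?_ ?_⟩
  · have h0 := (four_mul_abs_sub_le_dterm_zero r hab x y).trans (dterm_le_dX r _ _ 0)
    calc |a - b| ≤ 1 / 4 * dX r (Amap r a x) (Amap r b y) := by linarith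
      _ ≤ r ^ 2 / 2 * dX r (Amap r a x) (Amap r b y) :=
        mul_le_mul_of_nonneg_right (by nlinarith) (dX_nonneg r _ _)
  · rcases eq_or_ne x y with rfl | hxy
    · rw [rho, if_pos rfl]
      exact mul_nonneg (by positivity) (dX_nonneg r _ _)
    · rw [rho, if_neg hxy]
      calc ((r : ℝ) ^ firstDiff r x y)⁻¹ = r ^ 2 / 2 * (2 / (r : ℝ) ^ (firstDiff r x y + 2)) := by
            field_simp
            ring
        _ ≤ r ^ 2 / 2 * dX r (Amap r a x) (Amap r b y) := by
          gcongr
          exact (two_div_pow_le_dterm_firstDiff_succ hab hx hy hxy).trans (dterm_le_dX r _ _ _)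
end
end
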